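/- Let $f_n$ be a sequence of smooth real functions on an open set $U \subseteq \mathbb{C}$ such that for each $n$, $n |\partial f_n/\partial \bar z|^2 + \partial^2 f_n/\partial z\partial \bar z \le 0$ on $U$. Then for every compactly contained open subset $W \subset\subset U$, $\displaystyle \int_W \left|\frac{\partial f_n}{\partial \bar z}\right|^2 dA \to 0$ as $n \to \infty$. -/

import Mathlib

/-- ∂/∂x on ℂ ≅ ℝ². -/
noncomputable def pdx (u : ℂ → ℂ) (z : ℂ) : ℂ := fderiv ℝ u z 1

/-- ∂/∂y on ℂ ≅ ℝ². -/
noncomputable def pdy (u : ℂ → ℂ) (z : ℂ) : ℂ := fderiv ℝ u z Complex.I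

/-- Wirtinger derivative ∂/∂z. -/
noncomputable def wz (u : ℂ → ℂ) (z : ℂ) : ℂ := (pdx u z - Complex.I * pdy u z) / 2

/-- Wirtinger derivative ∂/∂z̄. -/
noncomputable def wzbar (u : ℂ → ℂ) (z : ℂ) : ℂ := (pdx u z + Complex.I * pdy u z) / 2

/-- ∂²/∂z∂z̄. -/
noncomputable def lap (u : ℂ → ℂ) (z : ℂ) : ℂ := wz (fun w => wzbar u w) z

/-- Coerce a real-valued function to a complex-valued one. -/
noncomputable def cx (u : ℂ → ℝ) : ℂ → ℂ := fun z => ((u z : ℝ) : ℂ)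

open MeasureTheory Set Manifold Filter

lemma cutoff {K U : Set ℂ} (hK : IsCompact K) (hU : IsOpen U) (hKU : K ⊆ U) :
    ∃ χ : ℂ → ℝ, ContDiff ℝ ((⊤:ℕ∞) : WithTop ℕ∞) χ ∧ HasCompactSupport χ ∧ tsupport χ ⊆ U ∧
      Set.EqOn χ 1 K ∧ ∀ x, χ x ∈ Set.Icc (0:ℝ) 1 := by
  obtain ⟨L, hL, hKL, hLU⟩ := exists_compact_between hK hU hKU
  obtain ⟨f, hf0, hf1, hf01⟩ := exists_contMDiffMap_zero_one_of_isClosed (n := (⊤ : ℕ∞)) (𝓘(ℝ, ℂ))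
    (isOpen_interior.isClosed_compl) hK.isClosed
    (disjoint_compl_left_iff.2 hKL)
  have hsupp : tsupport ⇑f ⊆ L := by
    apply Set.Subset.trans (closure_mono ?_) (hL.isClosed.closure_subset_iff.2 interior_subset)
    intro x hx
    by_contra hxL
    exact hx (hf0 hxL)
  refine ⟨f, ?_, hL.of_isClosed_subset (isClosed_tsupport _) hsupp, hsupp.trans hLU, hf1, hf01⟩
  exact contMDiff_iff_contDiff.1 f.contMDiff
open MeasureTheory Set

lemma lip_of_c1 (h : ℂ → ℝ) (hh : ContDiff ℝ 1 h) (hc : HasCompactSupport h) :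
    ∃ C : NNReal, LipschitzWith C h := by
  have hfd : Continuous (fderiv ℝ h) :=
    ContDiff.continuous_fderiv (𝕜 := ℝ) hh one_ne_zero
  have hcs : HasCompactSupport (fderiv ℝ h) := hc.fderiv (𝕜 := ℝ)
  obtain ⟨C, hC⟩ := hfd.norm.bddAbove_range_of_hasCompactSupport hcs.norm
  refine ⟨⟨max C 0, le_max_right _ _⟩, lipschitzWith_of_nnnorm_fderiv_le
    (hh.differentiable one_ne_zero) fun x => ?_⟩
  have : ‖fderiv ℝ h x‖ ≤ C := hC ⟨x, rfl⟩
  exact_mod_cast this.trans (le_max_left _ _)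

-- lineDeriv is zero at points where the function is locally constant / locally zero
lemma lineDeriv_eq_zero_of_eventually_const {g : ℂ → ℝ} {c : ℝ} {x : ℂ} (v : ℂ)
    (hg : ∀ᶠ y in nhds x, g y = c) : lineDeriv ℝ g x v = 0 := by
  have h1 : DifferentiableAt ℝ g x :=
    (differentiableAt_const c).congr_of_eventuallyEq hg
  rw [h1.lineDeriv_eq_fderiv]
  have : fderiv ℝ g x = fderiv ℝ (fun _ => c) x := Filter.EventuallyEq.fderiv_eq hg
  simp [this]

lemma integral_fderiv_cs (h : ℂ → ℝ) (hh : ContDiff ℝ 1 h) (hc : HasCompactSupport h) (v : ℂ) :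
    ∫ z : ℂ, fderiv ℝ h z v = 0 := by
  obtain ⟨L, hL, hKL, -⟩ := exists_compact_between hc
    (isOpen_univ : IsOpen (univ : Set ℂ)) (subset_univ _)
  obtain ⟨g, hgs, hgc, -, hg1, -⟩ := cutoff hL
    (isOpen_univ : IsOpen (univ : Set ℂ)) (subset_univ _)
  obtain ⟨C, hC⟩ := lip_of_c1 h hh hc
  obtain ⟨D, hD⟩ := lip_of_c1 g (hgs.of_le (by exact_mod_cast le_top)) hgc
  have key := LipschitzWith.integral_lineDeriv_mul_eq (μ := volume) hC hD hgc v
  have hR : ∫ x : ℂ, lineDeriv ℝ g x (-v) * h x = 0 := by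
    rw [integral_eq_zero_of_ae]
    filter_upwards with x
    by_cases hx : h x = 0
    · simp [hx]
    · have hx2 : x ∈ interior L := hKL (subset_closure hx)
      have : ∀ᶠ y in nhds x, g y = 1 := by
        filter_upwards [isOpen_interior.mem_nhds hx2] with y hy
        exact hg1 (interior_subset hy)
      rw [lineDeriv_eq_zero_of_eventually_const (-v) this, zero_mul]; simp
  have hL2 : ∀ x : ℂ, lineDeriv ℝ h x v * g x = fderiv ℝ h x v := by
    intro x
    by_cases hx : x ∈ tsupport h
    · rw [(hh.differentiable one_ne_zero x).lineDeriv_eq_fderiv, hg1 (interior_subset (hKL hx)), Pi.one_apply,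
        mul_one]
    · have h0 : ∀ᶠ y in nhds x, h y = 0 := by
        filter_upwards [(isClosed_tsupport h).isOpen_compl.mem_nhds hx] with y hy
        exact image_eq_zero_of_notMem_tsupport hy
      rw [lineDeriv_eq_zero_of_eventually_const v h0, zero_mul]
      have : fderiv ℝ h x = fderiv ℝ (fun _ => (0:ℝ)) x := Filter.EventuallyEq.fderiv_eq h0
      simp [this]
  calc ∫ z : ℂ, fderiv ℝ h z v = ∫ x : ℂ, lineDeriv ℝ h x v * g x := by
        simp_rw [hL2]
    _ = 0 := key.trans hR

lemma integral_fderiv_cs_cx (F : ℂ → ℂ) (hh : ContDiff ℝ 1 F) (hc : HasCompactSupport F)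
    (v : ℂ) : ∫ z : ℂ, fderiv ℝ F z v = 0 := by
  have hcont : Continuous (fun z => fderiv ℝ F z v) :=
    (ContDiff.continuous_fderiv_apply (𝕜 := ℝ) hh one_ne_zero).comp
      (Continuous.prodMk continuous_id continuous_const)
  have hsupp : HasCompactSupport (fun z => fderiv ℝ F z v) :=
    (hc.fderiv (𝕜 := ℝ)).comp_left (g := fun L : ℂ →L[ℝ] ℂ => L v) rfl
  have hint : Integrable (fun z => fderiv ℝ F z v) := hcont.integrable_of_hasCompactSupport hsupp
  have hre : ∀ (w : ℂ), (fderiv ℝ (fun z => (F z).re) w) = Complex.reCLM.comp (fderiv ℝ F w) :=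
    fun w => (Complex.reCLM.hasFDerivAt.comp w (hh.differentiable one_ne_zero w).hasFDerivAt).fderiv
  have him : ∀ (w : ℂ), (fderiv ℝ (fun z => (F z).im) w) = Complex.imCLM.comp (fderiv ℝ F w) :=
    fun w => (Complex.imCLM.hasFDerivAt.comp w (hh.differentiable one_ne_zero w).hasFDerivAt).fderiv
  have h1 : ∫ z : ℂ, fderiv ℝ (fun z => (F z).re) z v = 0 :=
    integral_fderiv_cs _ (Complex.reCLM.contDiff.comp hh)
      (hc.comp_left (g := Complex.re) rfl) v
  have h2 : ∫ z : ℂ, fderiv ℝ (fun z => (F z).im) z v = 0 :=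
    integral_fderiv_cs _ (Complex.imCLM.contDiff.comp hh)
      (hc.comp_left (g := Complex.im) rfl) v
  have Hre := integral_re (𝕜 := ℂ) hint
  have Him := integral_im (𝕜 := ℂ) hint
  simp only [RCLike.re_to_complex, RCLike.im_to_complex] at Hre Him
  apply Complex.ext
  · rw [← Hre, Complex.zero_re, ← h1]
    congr 1; ext z; rw [hre z]; rfl
  · rw [← Him, Complex.zero_im, ← h2]
    congr 1; ext z; rw [him z]; rfl


lemma wz_mul {u v : ℂ → ℂ} {z : ℂ} (hu : DifferentiableAt ℝ u z)
    (hv : DifferentiableAt ℝ v z) :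
    wz (fun w => u w * v w) z = wz u z * v z + u z * wz v z := by
  unfold wz pdx pdy
  rw [fderiv_fun_mul hu hv]
  simp only [ContinuousLinearMap.add_apply, ContinuousLinearMap.smul_apply, smul_eq_mul]
  ring

lemma wz_eq_zero_of_eventually_zero {u : ℂ → ℂ} {z : ℂ}
    (h : ∀ᶠ w in nhds z, u w = 0) : wz u z = 0 := by
  unfold wz pdx pdy
  have : fderiv ℝ u z = fderiv ℝ (fun _ => (0:ℂ)) z := Filter.EventuallyEq.fderiv_eq h
  simp [this]

lemma fderiv_apply_contDiffOn {u : ℂ → ℂ} {U : Set ℂ} (hU : IsOpen U)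
    (hu : ContDiffOn ℝ ((⊤:ℕ∞) : WithTop ℕ∞) u U) (c : ℂ) :
    ContDiffOn ℝ ((⊤:ℕ∞) : WithTop ℕ∞) (fun z => fderiv ℝ u z c) U := by
  have h1 : ContDiffOn ℝ ((⊤:ℕ∞) : WithTop ℕ∞) (fderiv ℝ u) U :=
    hu.fderiv_of_isOpen hU (by exact_mod_cast le_refl _)
  exact h1.clm_apply contDiffOn_const

lemma wzbar_contDiffOn {u : ℂ → ℂ} {U : Set ℂ} (hU : IsOpen U)
    (hu : ContDiffOn ℝ ((⊤:ℕ∞) : WithTop ℕ∞) u U) :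
    ContDiffOn ℝ ((⊤:ℕ∞) : WithTop ℕ∞) (fun z => wzbar u z) U := by
  unfold wzbar pdx pdy
  exact (((fderiv_apply_contDiffOn hU hu 1).add
    (contDiffOn_const.mul (fderiv_apply_contDiffOn hU hu Complex.I)))).div_const 2

lemma wz_contDiffOn {u : ℂ → ℂ} {U : Set ℂ} (hU : IsOpen U)
    (hu : ContDiffOn ℝ ((⊤:ℕ∞) : WithTop ℕ∞) u U) :
    ContDiffOn ℝ ((⊤:ℕ∞) : WithTop ℕ∞) (fun z => wz u z) U := by
  unfold wz pdx pdy
  exact (((fderiv_apply_contDiffOn hU hu 1).sub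
    (contDiffOn_const.mul (fderiv_apply_contDiffOn hU hu Complex.I)))).div_const 2

lemma continuous_patch {F : Type*} [NormedAddCommGroup F] {u : ℂ → F} {U s : Set ℂ}
    (hU : IsOpen U) (hu : ContinuousOn u U) (hs : IsClosed s)
    (h0 : ∀ z ∉ s, u z = 0) (hsU : s ⊆ U) : Continuous u := by
  rw [continuous_iff_continuousAt]
  intro z
  by_cases hz : z ∈ U
  · exact hu.continuousAt (hU.mem_nhds hz)
  · have hzs : z ∉ s := fun h => hz (hsU h)
    have hev : ∀ᶠ w in nhds z, u w = 0 := by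
      filter_upwards [hs.isOpen_compl.mem_nhds hzs] with w hw
      exact h0 w hw
    exact ContinuousAt.congr (continuousAt_const (y := (0:F))) (Filter.EventuallyEq.symm hev)

lemma contdiff_patch {u : ℂ → ℂ} {U s : Set ℂ} {m : WithTop ℕ∞}
    (hU : IsOpen U) (hu : ContDiffOn ℝ m u U) (hs : IsClosed s)
    (h0 : ∀ z ∉ s, u z = 0) (hsU : s ⊆ U) : ContDiff ℝ m u := by
  rw [contDiff_iff_contDiffAt]
  intro z
  by_cases hz : z ∈ U
  · exact hu.contDiffAt (hU.mem_nhds hz)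
  · have hzs : z ∉ s := fun h => hz (hsU h)
    have hev : ∀ᶠ w in nhds z, u w = 0 := by
      filter_upwards [hs.isOpen_compl.mem_nhds hzs] with w hw
      exact h0 w hw
    exact (contDiffAt_const (c := (0:ℂ))).congr_of_eventuallyEq hev

lemma wz_continuous {u : ℂ → ℂ} (hu : ContDiff ℝ 1 u) : Continuous (wz u) := by
  unfold wz pdx pdy
  have h1 : Continuous (fun z => fderiv ℝ u z 1) :=
    (ContDiff.continuous_fderiv_apply (𝕜 := ℝ) hu one_ne_zero).comp
      (Continuous.prodMk continuous_id continuous_const)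
  have h2 : Continuous (fun z => fderiv ℝ u z Complex.I) :=
    (ContDiff.continuous_fderiv_apply (𝕜 := ℝ) hu one_ne_zero).comp
      (Continuous.prodMk continuous_id continuous_const)
  exact ((h1.sub (continuous_const.mul h2))).div_const 2


theorem stmt10 (U : Set ℂ) (hU : IsOpen U) (f : ℕ → ℂ → ℝ)
    (hf : ∀ n, ContDiffOn ℝ (⊤ : ℕ∞) (f n) U)
    (hineq : ∀ n : ℕ, 1 ≤ n → ∀ z ∈ U,
      (n : ℝ) * (‖wzbar (cx (f n)) z‖) ^ 2 + (lap (cx (f n)) z).re ≤ 0) :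
    ∀ W : Set ℂ, IsOpen W → closure W ⊆ U → IsCompact (closure W) →
      Tendsto (fun n => ∫ z in W, (‖wzbar (cx (f n)) z‖) ^ 2) atTop (nhds 0) := by
  intro W hWopen hWU hWc
  obtain ⟨χ, hχs, hχc, hχU, hχ1, hχ01⟩ := cutoff hWc hU hWU
  set cχ : ℂ → ℂ := cx χ with hcχ_def
  have hcχ : ContDiff ℝ ((⊤:ℕ∞) : WithTop ℕ∞) cχ := Complex.ofRealCLM.contDiff.comp hχs
  have hcχ1 : ContDiff ℝ 1 cχ := hcχ.of_le (by exact_mod_cast le_top)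
  have hcχ0 : ∀ z ∉ tsupport χ, cχ z = 0 := by
    intro z hz
    simp [hcχ_def, cx, image_eq_zero_of_notMem_tsupport hz]
  have hcχ_ev0 : ∀ z ∉ tsupport χ, ∀ᶠ w in nhds z, cχ w = 0 := by
    intro z hz
    filter_upwards [(isClosed_tsupport χ).isOpen_compl.mem_nhds hz] with w hw
    exact hcχ0 w hw
  have hwzχ_cont : Continuous (fun z => wz cχ z) := wz_continuous hcχ1
  have habs_cont : Continuous (fun z => (‖wz cχ z‖) ^ 2) := by
    simpa [Complex.sq_norm, Function.comp_def] using (Complex.continuous_normSq.comp hwzχ_cont)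
  have hwzχ0 : ∀ z ∉ tsupport χ, wz cχ z = 0 := fun z hz =>
    wz_eq_zero_of_eventually_zero (hcχ_ev0 z hz)
  have hCst_int : Integrable (fun z => (‖wz cχ z‖) ^ 2) :=
    habs_cont.integrable_of_hasCompactSupport
      (HasCompactSupport.intro hχc (fun z hz => by simp [hwzχ0 z hz]))
  set Cst : ℝ := ∫ z : ℂ, (‖wz cχ z‖) ^ 2 with hCst_def
  have key : ∀ n : ℕ, 1 ≤ n →
      0 ≤ (∫ z in W, (‖wzbar (cx (f n)) z‖) ^ 2) ∧
      (∫ z in W, (‖wzbar (cx (f n)) z‖) ^ 2) ≤ 4 * Cst / (n:ℝ)^2 := by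
    intro n hn
    have hn' : (1:ℝ) ≤ (n:ℝ) := by exact_mod_cast hn
    have hnpos : (0:ℝ) < (n:ℝ) := lt_of_lt_of_le one_pos hn'
    set g : ℂ → ℂ := cx (f n) with hg_def
    have hg : ContDiffOn ℝ ((⊤:ℕ∞) : WithTop ℕ∞) g U :=
      Complex.ofRealCLM.contDiff.comp_contDiffOn ((hf n).of_le (by simp))
    set b : ℂ → ℂ := fun z => wzbar g z with hb_def
    have hb : ContDiffOn ℝ ((⊤:ℕ∞) : WithTop ℕ∞) b U := wzbar_contDiffOn hU hg
    have hb1 : ∀ z ∈ U, DifferentiableAt ℝ b z := by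
      intro z hz
      exact ((hb.contDiffAt (hU.mem_nhds hz)).of_le
        (by exact_mod_cast le_top)).differentiableAt one_ne_zero
    set q : ℂ → ℂ := fun z => cχ z * cχ z with hq_def
    have hq : ContDiff ℝ ((⊤:ℕ∞) : WithTop ℕ∞) q := hcχ.mul hcχ
    have hq1 : ContDiff ℝ 1 q := hq.of_le (by exact_mod_cast le_top)
    have hq0 : ∀ z ∉ tsupport χ, q z = 0 := fun z hz => by
      simp [hq_def, hcχ0 z hz]
    have hq_ev0 : ∀ z ∉ tsupport χ, ∀ᶠ w in nhds z, q w = 0 := by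
      intro z hz
      filter_upwards [(isClosed_tsupport χ).isOpen_compl.mem_nhds hz] with w hw
      exact hq0 w hw
    have hwzq0 : ∀ z ∉ tsupport χ, wz q z = 0 := fun z hz =>
      wz_eq_zero_of_eventually_zero (hq_ev0 z hz)
    have hwzq_eq : ∀ z, wz q z = 2 * (cχ z * wz cχ z) := by
      intro z
      rw [hq_def]
      rw [wz_mul (hcχ1.differentiable one_ne_zero z) (hcχ1.differentiable one_ne_zero z)]
      ring
    set h : ℂ → ℂ := fun z => q z * b z with hh_def
    have hh0 : ∀ z ∉ tsupport χ, h z = 0 := fun z hz => by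
      simp [hh_def, hq0 z hz]
    have hh1 : ContDiff ℝ 1 h :=
      contdiff_patch hU ((hq.contDiffOn.mul hb).of_le (by exact_mod_cast le_top))
        (isClosed_tsupport χ) hh0 hχU
    have hhc : HasCompactSupport h := HasCompactSupport.intro hχc hh0
    have hwzh0 : ∀ z ∉ tsupport χ, wz h z = 0 := by
      intro z hz
      apply wz_eq_zero_of_eventually_zero
      filter_upwards [(isClosed_tsupport χ).isOpen_compl.mem_nhds hz] with w hw
      exact hh0 w hw
    -- integral of wz h is zero
    have hfd_int : ∀ v : ℂ, Integrable (fun z => fderiv ℝ h z v) := by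
      intro v
      apply Continuous.integrable_of_hasCompactSupport
      · exact (ContDiff.continuous_fderiv_apply (𝕜 := ℝ) hh1 one_ne_zero).comp
          (Continuous.prodMk continuous_id continuous_const)
      · exact (hhc.fderiv (𝕜 := ℝ)).comp_left (g := fun L : ℂ →L[ℝ] ℂ => L v) rfl
    have hI0 : ∫ z : ℂ, wz h z = 0 := by
      have e1 : ∫ z : ℂ, fderiv ℝ h z 1 = 0 := integral_fderiv_cs_cx h hh1 hhc 1
      have e2 : ∫ z : ℂ, fderiv ℝ h z Complex.I = 0 := integral_fderiv_cs_cx h hh1 hhc Complex.I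
      have : (fun z : ℂ => wz h z) =
          fun z : ℂ => (fderiv ℝ h z 1 - Complex.I * fderiv ℝ h z Complex.I) / 2 := rfl
      rw [this]
      rw [integral_div, integral_sub (hfd_int 1) ((hfd_int Complex.I).const_mul Complex.I),
        integral_const_mul, e1, e2]
      simp
    -- the three auxiliary real/complex functions
    set P : ℂ → ℂ := fun z => wz q z * b z with hP_def
    set Q : ℂ → ℝ := fun z => (χ z)^2 * (lap g z).re with hQ_def
    set Sf : ℂ → ℝ := fun z => (χ z)^2 * (‖b z‖)^2 with hSf_def
    have hχ0 : ∀ z ∉ tsupport χ, χ z = 0 := fun z hz => image_eq_zero_of_notMem_tsupport hz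
    have hlap_contOn : ContinuousOn (fun z => lap g z) U := by
      have : ContinuousOn (fun z => wz b z) U := (wz_contDiffOn hU hb).continuousOn
      exact this
    have hP_cont : Continuous P := by
      apply continuous_patch hU ?_ (isClosed_tsupport χ) (fun z hz => by
        simp [hP_def, hwzq0 z hz]) hχU
      exact ((wz_continuous hq1).continuousOn).mul hb.continuousOn
    have hP_supp : HasCompactSupport P :=
      HasCompactSupport.intro hχc (fun z hz => by simp [hP_def, hwzq0 z hz])
    have hPre_int : Integrable (fun z => (P z).re) :=
      (Complex.continuous_re.comp hP_cont).integrable_of_hasCompactSupport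
        (HasCompactSupport.intro hχc (fun z hz => by simp [hP_def, hwzq0 z hz]))
    have hQ_cont : Continuous Q := by
      apply continuous_patch hU ?_ (isClosed_tsupport χ) (fun z hz => by
        simp [hQ_def, hχ0 z hz]) hχU
      exact ((hχs.continuous.pow 2).continuousOn).mul
        (Complex.continuous_re.comp_continuousOn hlap_contOn)
    have hQ_int : Integrable Q :=
      hQ_cont.integrable_of_hasCompactSupport
        (HasCompactSupport.intro hχc (fun z hz => by simp [hQ_def, hχ0 z hz]))
    have hSf_cont : Continuous Sf := by
      apply continuous_patch hU ?_ (isClosed_tsupport χ) (fun z hz => by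
        simp [hSf_def, hχ0 z hz]) hχU
      apply ((hχs.continuous.pow 2).continuousOn).mul
      have : ContinuousOn b U := hb.continuousOn
      exact (continuous_pow 2).comp_continuousOn (continuous_norm.comp_continuousOn this)
    have hSf_int : Integrable Sf :=
      hSf_cont.integrable_of_hasCompactSupport
        (HasCompactSupport.intro hχc (fun z hz => by simp [hSf_def, hχ0 z hz]))
    have hSf_nonneg : ∀ z, 0 ≤ Sf z := fun z => by positivity
    -- main pointwise identity
    have hident : ∀ z, (wz h z).re = (P z).re + Q z := by
      intro z
      by_cases hz : z ∈ U
      · have hqd : DifferentiableAt ℝ q z := hq1.differentiable one_ne_zero z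
        have hsplit : wz h z = wz q z * b z + q z * wz b z := wz_mul hqd (hb1 z hz)
        have hlapeq : lap g z = wz b z := rfl
        have hqz : q z = ((χ z * χ z : ℝ) : ℂ) := by
          simp [hq_def, hcχ_def, cx]
        show (wz h z).re = (wz q z * b z).re + (χ z)^2 * (lap g z).re
        rw [hsplit, Complex.add_re, hqz, hlapeq, Complex.re_ofReal_mul]
        ring
      · have hzχ : z ∉ tsupport χ := fun hc => hz (hχU hc)
        show (wz h z).re = (wz q z * b z).re + (χ z)^2 * (lap g z).re
        rw [hwzh0 z hzχ, hwzq0 z hzχ, hχ0 z hzχ]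
        simp
    -- ∫ (wz h).re = 0
    have hwzh_cont : Continuous (fun z => wz h z) := wz_continuous hh1
    have hwzh_int : Integrable (fun z => wz h z) :=
      hwzh_cont.integrable_of_hasCompactSupport
        (HasCompactSupport.intro hχc hwzh0)
    have hzero : ∫ z : ℂ, (wz h z).re = 0 := by
      have hre := integral_re (𝕜 := ℂ) hwzh_int
      simp only [RCLike.re_to_complex] at hre
      rw [hre, hI0, Complex.zero_re]
    have hsum : (∫ z : ℂ, (P z).re) + (∫ z : ℂ, Q z) = 0 := by
      rw [← integral_add hPre_int hQ_int, ← hzero]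
      congr 1
      ext z
      rw [hident z]
    -- pointwise inequalities
    have hptQ : ∀ z, (n:ℝ) * Sf z + Q z ≤ 0 := by
      intro z
      by_cases hz : z ∈ U
      · have hiq := hineq n hn z hz
        have hb_eq : ‖wzbar g z‖ = ‖b z‖ := rfl
        rw [hb_eq] at hiq
        have hχsq : 0 ≤ (χ z)^2 := sq_nonneg _
        have := mul_nonpos_of_nonneg_of_nonpos hχsq hiq
        calc (n:ℝ) * Sf z + Q z
            = (χ z)^2 * ((n:ℝ) * ‖b z‖ ^ 2 + (lap g z).re) := by
              simp only [hSf_def, hQ_def]; ring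
          _ ≤ 0 := this
      · have hzχ : z ∉ tsupport χ := fun hc => hz (hχU hc)
        have hz0 : χ z = 0 := hχ0 z hzχ
        simp [hSf_def, hQ_def, hz0]
    have hptP : ∀ z, (P z).re ≤
        (n:ℝ)/2 * Sf z + 2/(n:ℝ) * (‖wz cχ z‖)^2 := by
      intro z
      have h1 : (P z).re ≤ ‖P z‖ := Complex.re_le_norm _
      have habs : ‖P z‖ =
          2 * (χ z * (‖wz cχ z‖ * ‖b z‖)) := by
        show ‖wz q z * b z‖ = _
        rw [hwzq_eq z, norm_mul, norm_mul, norm_mul]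
        have : ‖cχ z‖ = χ z := by
          simp [hcχ_def, cx, Complex.norm_real, abs_of_nonneg (hχ01 z).1]
        rw [this]
        simp
        ring
      rw [habs] at h1
      refine h1.trans ?_
      have hA : (0:ℝ) ≤ ‖b z‖ := norm_nonneg _
      have hB : (0:ℝ) ≤ ‖wz cχ z‖ := norm_nonneg _
      have hχnn : 0 ≤ χ z := (hχ01 z).1
      have hSz : Sf z = (χ z)^2 * (‖b z‖)^2 := rfl
      rw [hSz]
      rw [← sub_nonneg]
      have expand : (n:ℝ)/2 * ((χ z)^2 * (‖b z‖)^2) +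
          2/(n:ℝ) * (‖wz cχ z‖)^2 -
          2 * (χ z * (‖wz cχ z‖ * ‖b z‖)) =
          ((n:ℝ) * (χ z * ‖b z‖) - 2 * ‖wz cχ z‖)^2 / (2*(n:ℝ)) := by
        field_simp
        ring
      rw [expand]
      positivity
    -- integral inequalities
    set S : ℝ := ∫ z : ℂ, Sf z with hS_def
    have hS_nonneg : 0 ≤ S := integral_nonneg hSf_nonneg
    have hleft : (n:ℝ) * S + (∫ z : ℂ, Q z) ≤ 0 := by
      have hint : ∫ z : ℂ, ((n:ℝ) * Sf z + Q z) ≤ 0 :=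
        integral_nonpos (fun z => hptQ z)
      rwa [integral_add (hSf_int.const_mul _) hQ_int, integral_const_mul] at hint
    have hright : (∫ z : ℂ, (P z).re) ≤ (n:ℝ)/2 * S + 2/(n:ℝ) * Cst := by
      have hint : (∫ z : ℂ, (P z).re) ≤
          ∫ z : ℂ, ((n:ℝ)/2 * Sf z + 2/(n:ℝ) * (‖wz cχ z‖)^2) :=
        integral_mono hPre_int ((hSf_int.const_mul _).add (hCst_int.const_mul _)) hptP
      rwa [integral_add (hSf_int.const_mul _) (hCst_int.const_mul _),
        integral_const_mul, integral_const_mul] at hint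
    have hSbound : S ≤ 4 * Cst / (n:ℝ)^2 := by
      have hn2 : (0:ℝ) < (n:ℝ)^2 := by positivity
      rw [le_div_iff₀ hn2]
      have b2 : (n:ℝ)/2 * S ≤ 2/(n:ℝ) * Cst := by linarith
      have b3 : (n:ℝ) * ((n:ℝ)/2 * S) ≤ (n:ℝ) * (2/(n:ℝ) * Cst) :=
        mul_le_mul_of_nonneg_left b2 (le_of_lt hnpos)
      have b4 : (n:ℝ) * (2/(n:ℝ) * Cst) = 2 * Cst := by field_simp
      rw [b4] at b3
      nlinarith [b3]
    -- conclude
    have hWeq : (∫ z in W, (‖wzbar g z‖)^2) = ∫ z in W, Sf z := by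
      apply setIntegral_congr_fun hWopen.measurableSet
      intro z hz
      have hz1 : χ z = 1 := hχ1 (subset_closure hz)
      show ‖wzbar g z‖ ^ 2 = (χ z)^2 * (‖b z‖)^2
      rw [hz1]
      simp [hb_def]
    have hWle : (∫ z in W, Sf z) ≤ S :=
      setIntegral_le_integral hSf_int (Filter.Eventually.of_forall hSf_nonneg)
    constructor
    · exact setIntegral_nonneg hWopen.measurableSet (fun z _ => by positivity)
    · show (∫ z in W, (‖wzbar g z‖)^2) ≤ 4 * Cst / (n:ℝ)^2
      rw [hWeq]
      linarith
  apply squeeze_zero' (g := fun n : ℕ => 4 * Cst / (n:ℝ)^2)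
  · filter_upwards [eventually_ge_atTop 1] with n hn using (key n hn).1
  · filter_upwards [eventually_ge_atTop 1] with n hn using (key n hn).2
  · apply Tendsto.div_atTop (tendsto_const_nhds)
    exact (tendsto_pow_atTop (two_ne_zero)).comp tendsto_natCast_atTop_atTop
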